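/- arXiv:2512.00416 — 2 statements merged into one kernel-verified Lean document; each statement's English description precedes it below -/
import Mathlib

section
/- For every n ≥ 1 and every polynomial f, (x∘I)ⁿ(f)(x) = Σ_{k=0}^{n−1} (−1)^k a(n−1,k) · x^{n−k} · I^{n+k}(f)(x), where a(n,k) are the Bessel numbers defined by a(0,0)=1 and a(n,k) = a(n−1,k) + (n−k+1)·a(n,k−1). -/
open Polynomial Finset

/-- The integration operator `f ↦ ∫₀ˣ f(t) dt` on rational polynomials. -/
noncomputable def intOp (f : Polynomial ℚ) : Polynomial ℚ :=
  f.sum (fun n a => Polynomial.C (a / (n + 1)) * Polynomial.X ^ (n + 1))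

/-- The Bessel numbers (OEIS A001498). -/
def bessel : ℕ → ℕ → ℕ
  | 0, 0 => 1
  | 0, _ + 1 => 0
  | n + 1, 0 => bessel n 0
  | n + 1, k + 1 =>
      if n + 1 < k + 1 then 0
      else bessel n (k + 1) + ((n + 1) - (k + 1) + 1) * bessel (n + 1) k
  termination_by n k => (n, k)


def Qfac (m j : ℕ) : ℚ := ∏ i ∈ Finset.range j, (1 / ((m : ℚ) + i + 1))

lemma Qfac_zero (m : ℕ) : Qfac m 0 = 1 := by simp [Qfac]

lemma Qfac_succ (m j : ℕ) : Qfac m (j + 1) = Qfac m j * (1 / ((m : ℚ) + j + 1)) := by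
  simp [Qfac, Finset.prod_range_succ]
  ring

lemma Qfac_one (m : ℕ) : Qfac m 1 = 1 / ((m : ℚ) + 1) := by simp [Qfac]

lemma Qfac_pos (m j : ℕ) : 0 < Qfac m j := by
  apply Finset.prod_pos
  intro i _
  positivity

lemma Qfac_add (m a : ℕ) : ∀ b : ℕ, Qfac m (a + b) = Qfac m a * Qfac (m + a) b := by
  intro b
  induction b with
  | zero => simp [Qfac_zero]
  | succ b ih =>
      rw [show a + (b + 1) = (a + b) + 1 by ring, Qfac_succ, ih, Qfac_succ]
      push_cast
      ring

lemma key (d : ℕ) : ∀ m : ℕ,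
    ∑ k ∈ Finset.range (d + 1),
      (-1 : ℚ) ^ k * ((d.factorial : ℚ) / ((d - k).factorial : ℚ)) * Qfac m (d + 1 + k)
      = Qfac m d * (1 / ((m : ℚ) + 2 * d + 1)) := by
  induction d with
  | zero =>
      intro m
      simp [Qfac_one, Qfac_zero]
  | succ d ih =>
      intro m
      rw [Finset.sum_range_succ']
      have h0 : (-1 : ℚ) ^ 0 * (((d+1).factorial : ℚ) / (((d+1) - 0).factorial : ℚ))
          * Qfac m (d + 1 + 1 + 0) = Qfac m (d + 2) := by
        have : (((d+1).factorial : ℚ)) ≠ 0 := Nat.cast_ne_zero.mpr (Nat.factorial_ne_zero _)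
        simp [div_self this]
      rw [h0]
      have hterm : ∀ k ∈ Finset.range (d + 1),
          (-1 : ℚ) ^ (k+1) * (((d+1).factorial : ℚ) / (((d+1) - (k+1)).factorial : ℚ))
            * Qfac m (d + 1 + 1 + (k + 1))
          = (-((d:ℚ)+1)) * (Qfac m 2 *
            ((-1 : ℚ) ^ k * ((d.factorial : ℚ) / ((d - k).factorial : ℚ)) * Qfac (m+2) (d + 1 + k))) := by
        intro k hk
        have h1 : (d + 1) - (k + 1) = d - k := by omega
        have h2 : d + 1 + 1 + (k + 1) = 2 + (d + 1 + k) := by omega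
        rw [h1, h2, Qfac_add m 2 (d+1+k)]
        rw [Nat.factorial_succ]
        push_cast
        ring
      rw [Finset.sum_congr rfl hterm, ← Finset.mul_sum, ← Finset.mul_sum, ih (m+2)]
      have hq2 : Qfac m (d + 2) = Qfac m 2 * Qfac (m+2) d := by
        rw [show d + 2 = 2 + d by ring, Qfac_add]
      have hq1 : Qfac m (d + 2) = Qfac m (d+1) * (1 / ((m:ℚ) + d + 2)) := by
        rw [show d+2 = (d+1)+1 from rfl, Qfac_succ]
        push_cast; ring
      have hne1 : ((m:ℚ) + d + 2) ≠ 0 := by positivity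
      have hne2 : ((m:ℚ) + 2 * d + 3) ≠ 0 := by positivity
      have h5 : Qfac m (d+1) = Qfac m (d+2) * ((m:ℚ) + d + 2) := by
        rw [hq1]; field_simp
      have hcast : (((m+2):ℕ) : ℚ) + 2 * d + 1 = (m:ℚ) + 2 * d + 3 := by push_cast; ring
      rw [hcast, h5, hq2]
      push_cast
      field_simp
      ring



lemma bessel_zero_right (n : ℕ) : bessel (n + 1) 0 = bessel n 0 := by
  rw [bessel]

lemma bessel_eq_zero {n k : ℕ} (h : n < k) : bessel n k = 0 := by
  match n, k with
  | 0, k + 1 => rw [bessel]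
  | n + 1, k + 1 =>
      rw [bessel, if_pos (by omega)]

lemma bessel_rec (n k : ℕ) (h : k ≤ n) :
    bessel (n + 1) (k + 1) = bessel n (k + 1) + (n - k + 1) * bessel (n + 1) k := by
  rw [bessel, if_neg (by omega)]
  congr 2
  omega

lemma besselAlt (n : ℕ) : ∀ l, l ≤ n + 1 →
    (bessel (n+1) l : ℚ) = ∑ k ∈ Finset.range (l+1),
      (bessel n k : ℚ) * (((n+1-k).factorial : ℚ) / ((n+1-l).factorial : ℚ)) := by
  intro l
  induction l with
  | zero =>
      intro _
      have hne : (((n+1).factorial : ℚ)) ≠ 0 := Nat.cast_ne_zero.mpr (Nat.factorial_ne_zero _)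
      simp [bessel_zero_right, div_self hne]
  | succ l ih =>
      intro h
      have hl : l ≤ n := by omega
      have hnl : n + 1 - (l+1) = n - l := by omega
      rw [Finset.sum_range_succ, hnl]
      have hfac : ((n+1-l).factorial : ℚ) = ((n - l : ℕ) + 1 : ℚ) * ((n-l).factorial : ℚ) := by
        rw [show n + 1 - l = (n - l) + 1 by omega, Nat.factorial_succ]
        push_cast; ring
      have hterm : ∀ k ∈ Finset.range (l+1),
          (bessel n k : ℚ) * (((n+1-k).factorial : ℚ) / ((n-l).factorial : ℚ))
          = (((n-l : ℕ) : ℚ) + 1) * ((bessel n k : ℚ) * (((n+1-k).factorial : ℚ) / ((n+1-l).factorial : ℚ))) := by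
        intro k _
        have h2 : ((n-l : ℕ) : ℚ) + 1 ≠ 0 := by positivity
        have haux : ∀ (B F fb c : ℚ), c ≠ 0 → B * (F / fb) = c * (B * (F / (c * fb))) := by
          intro B F fb c hc
          rcases eq_or_ne fb 0 with h|h
          · simp [h]
          · field_simp
        rw [hfac]
        exact haux _ _ _ _ h2
      rw [Finset.sum_congr rfl hterm, ← Finset.mul_sum, ← ih (by omega)]
      have hlast : (((n-l).factorial : ℚ) / ((n-l).factorial : ℚ)) = 1 :=
        div_self (Nat.cast_ne_zero.mpr (Nat.factorial_ne_zero _))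
      rw [hlast, mul_one, bessel_rec n l hl]
      push_cast
      ring

lemma mainId (N : ℕ) : ∀ m : ℕ,
    ∑ k ∈ Finset.range (N+1), (-1:ℚ)^k * (bessel N k : ℚ) * Qfac m (N+1+k)
      = ∏ i ∈ Finset.range (N+1), (1 / ((m:ℚ) + 2*i + 1)) := by
  induction N with
  | zero =>
      intro m
      simp [bessel, Qfac_one]
  | succ N ih =>
      intro m
      have h1 : ∀ l ∈ Finset.range (N+2),
          (-1:ℚ)^l * (bessel (N+1) l : ℚ) * Qfac m (N+1+1+l)
          = ∑ k ∈ Finset.range (l+1),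
              ((-1:ℚ)^l * ((bessel N k : ℚ) * (((N+1-k).factorial : ℚ) / ((N+1-l).factorial : ℚ))))
                * Qfac m (N+2+l) := by
        intro l hl
        rw [besselAlt N l (by simp at hl; omega), Finset.mul_sum, Finset.sum_mul]
      rw [Finset.sum_congr rfl h1]
      set G : ℕ → ℕ → ℚ := fun k l =>
        ((-1:ℚ)^l * ((bessel N k : ℚ) * (((N+1-k).factorial : ℚ) / ((N+1-l).factorial : ℚ))))
          * Qfac m (N+2+l) with hG
      have h2 : ∑ l ∈ Finset.range (N+2), ∑ k ∈ Finset.range (l+1), G k l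
          = ∑ k ∈ Finset.range (N+2), ∑ l ∈ Finset.Ico k (N+2), G k l := by
        simp only [Finset.range_eq_Ico]
        rw [← Finset.sum_Ico_Ico_comm]
      rw [h2]
      have h3 : ∀ k ∈ Finset.range (N+2), ∑ l ∈ Finset.Ico k (N+2), G k l
          = ((-1:ℚ)^k * (bessel N k : ℚ) * Qfac m (N+1+k)) * (1/((m:ℚ)+2*N+3)) := by
        intro k hk
        have hkN : k ≤ N+1 := by simp at hk; omega
        rw [Finset.sum_Ico_eq_sum_range]
        have hd : N + 2 - k = (N+1-k) + 1 := by omega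
        rw [hd]
        set d := N + 1 - k with hddef
        have hterm : ∀ j ∈ Finset.range (d+1), G k (k+j)
            = ((bessel N k : ℚ) * ((-1:ℚ)^k * Qfac m (2*k))) *
              ((-1:ℚ)^j * ((d.factorial : ℚ) / ((d-j).factorial : ℚ)) * Qfac (m+2*k) (d+1+j)) := by
          intro j hj
          have e1 : N + 1 - (k + j) = d - j := by omega
          have e2 : N + 2 + (k + j) = 2*k + (d + 1 + j) := by omega
          rw [hG]
          simp only
          rw [e1, e2, Qfac_add m (2*k) (d+1+j), pow_add]
          have e3 : N + 1 - k = d := rfl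
          rw [e3]
          ring
        rw [Finset.sum_congr rfl hterm, ← Finset.mul_sum, key d (m + 2*k)]
        have e4 : Qfac m (2*k) * Qfac (m+2*k) d = Qfac m (N+1+k) := by
          rw [← Qfac_add, show 2*k + d = N+1+k by omega]
        have e5 : ((m + 2*k : ℕ) : ℚ) + 2 * (d : ℚ) + 1 = (m:ℚ) + 2*N + 3 := by
          rw [hddef, Nat.cast_sub (by omega)]
          push_cast
          ring
        rw [mul_assoc ((bessel N k : ℚ)) _ _, mul_assoc ((-1:ℚ)^k) _ _]
        rw [show Qfac m (2*k) * (Qfac (m+2*k) d * (1 / (((m + 2*k : ℕ) : ℚ) + 2 * (d:ℚ) + 1)))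
            = (Qfac m (2*k) * Qfac (m+2*k) d) * (1 / (((m + 2*k : ℕ) : ℚ) + 2 * (d:ℚ) + 1)) from by ring]
        rw [e4, e5]
        ring
      rw [Finset.sum_congr rfl h3, Finset.sum_range_succ,
        bessel_eq_zero (show N < N+1 by omega)]
      simp only [Nat.cast_zero, mul_zero, zero_mul, add_zero]
      rw [← Finset.sum_mul, ih m]
      conv_rhs => rw [Finset.prod_range_succ]
      push_cast
      ring


lemma intOp_monomial (m : ℕ) (a : ℚ) :
    intOp ((Polynomial.monomial m) a) = (Polynomial.monomial (m+1)) (a / ((m:ℚ)+1)) := by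
  unfold intOp
  rw [Polynomial.sum_monomial_index]
  · rw [Polynomial.C_mul_X_pow_eq_monomial]
  · simp

lemma intOp_add (p q : Polynomial ℚ) : intOp (p + q) = intOp p + intOp q := by
  unfold intOp
  rw [Polynomial.sum_add_index]
  · intro i; simp
  · intro i b c; rw [add_div, map_add, add_mul]

lemma intOp_iter_add (j : ℕ) : ∀ p q : Polynomial ℚ,
    intOp^[j] (p + q) = intOp^[j] p + intOp^[j] q := by
  induction j with
  | zero => intro p q; simp
  | succ j ih =>
      intro p q
      rw [Function.iterate_succ_apply, Function.iterate_succ_apply,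
        Function.iterate_succ_apply, intOp_add, ih]

lemma T_iter_add (j : ℕ) : ∀ p q : Polynomial ℚ,
    (fun g => Polynomial.X * intOp g)^[j] (p + q)
      = (fun g => Polynomial.X * intOp g)^[j] p + (fun g => Polynomial.X * intOp g)^[j] q := by
  induction j with
  | zero => intro p q; simp
  | succ j ih =>
      intro p q
      simp only [Function.iterate_succ_apply]
      rw [intOp_add, mul_add, ih]

lemma intOp_iter_monomial (j : ℕ) : ∀ (m : ℕ) (a : ℚ),
    intOp^[j] ((Polynomial.monomial m) a) = (Polynomial.monomial (m+j)) (a * Qfac m j) := by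
  induction j with
  | zero => intro m a; simp [Qfac_zero]
  | succ j ih =>
      intro m a
      rw [Function.iterate_succ_apply, intOp_monomial, ih]
      rw [show m+1+j = m+(j+1) by omega]
      congr 1
      rw [show j+1 = 1+j by omega, Qfac_add, Qfac_one]
      field_simp

def Rfun (m n : ℕ) : ℚ := ∏ i ∈ Finset.range n, (1 / ((m:ℚ) + 2*i + 1))

lemma Rfun_step (m n : ℕ) : Rfun m (n+1) = Rfun (m+2) n * (1/((m:ℚ)+1)) := by
  rw [Rfun, Rfun, Finset.prod_range_succ']
  congr 1
  · apply Finset.prod_congr rfl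
    intro i _
    push_cast
    ring_nf
  · norm_num

lemma T_iter_monomial (n : ℕ) : ∀ (m : ℕ) (a : ℚ),
    (fun g => Polynomial.X * intOp g)^[n] ((Polynomial.monomial m) a)
      = (Polynomial.monomial (m+2*n)) (a * Rfun m n) := by
  induction n with
  | zero => intro m a; simp [Rfun]
  | succ n ih =>
      intro m a
      simp only [Function.iterate_succ_apply]
      rw [intOp_monomial, Polynomial.X_mul_monomial, ih]
      rw [show m+1+1+2*n = m+2*(n+1) by ring]
      congr 1
      rw [show m+1+1 = m+2 from rfl, Rfun_step m n]
      ring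

theorem normal_ordering_xI_pow (n : ℕ) (hn : 1 ≤ n) (f : Polynomial ℚ) :
    (fun g => X * intOp g)^[n] f =
      ∑ k ∈ Finset.range n,
        Polynomial.C ((-1 : ℚ) ^ k * (bessel (n - 1) k : ℚ)) * X ^ (n - k) *
          intOp^[n + k] f := by
  induction f using Polynomial.induction_on' with
  | add p q hp hq =>
      rw [T_iter_add, hp, hq, ← Finset.sum_add_distrib]
      apply Finset.sum_congr rfl
      intro k _
      rw [intOp_iter_add]
      ring
  | monomial M a =>
      obtain ⟨N, rfl⟩ : ∃ N, n = N + 1 := ⟨n - 1, by omega⟩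
      rw [T_iter_monomial]
      have hterm : ∀ k ∈ Finset.range (N+1),
          Polynomial.C ((-1 : ℚ) ^ k * (bessel (N + 1 - 1) k : ℚ)) * X ^ (N + 1 - k) *
              intOp^[N + 1 + k] ((Polynomial.monomial M) a)
          = (Polynomial.monomial (M + 2*(N+1)))
              (((-1:ℚ)^k * (bessel N k : ℚ)) * (a * Qfac M (N+1+k))) := by
        intro k hk
        have hk' : k ≤ N := by simp at hk; omega
        rw [intOp_iter_monomial, Polynomial.C_mul_X_pow_eq_monomial,
          Polynomial.monomial_mul_monomial]
        rw [show (N+1-k) + (M + (N+1+k)) = M + 2*(N+1) by omega]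
        norm_num
      rw [Finset.sum_congr rfl hterm, ← map_sum]
      congr 1
      have hm := mainId N M
      rw [show Rfun M (N+1) = ∏ i ∈ Finset.range (N+1), (1 / ((M:ℚ) + 2*i + 1)) from rfl,
        ← hm, Finset.mul_sum]
      apply Finset.sum_congr rfl
      intro k _
      ring
end

section
/- For all n ≥ 1, the coefficients in the expansion (x∘I)ⁿ = Σ_{k=0}^{n−1} (−1)^k a(n−1,k) x^{n−k} I^{n+k} alternate in sign and satisfy a(n−1,k) ≥ 1 for all 0 ≤ k ≤ n−1; in particular a(n−1,0) = 1 and a(n−1,n−1) = (2n−2)!/(2^{n−1}(n−1)!). -/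
open Finset

lemma bessel_zero (n : ℕ) : bessel n 0 = 1 := by
  induction n with
  | zero => rw [bessel]
  | succ n ih => rw [bessel]; exact ih

lemma bessel_of_lt : ∀ n k : ℕ, n < k → bessel n k = 0 := by
  intro n k h
  match n, k with
  | 0, k + 1 => rw [bessel]
  | n + 1, k + 1 => rw [bessel, if_pos h]

lemma bessel_key : ∀ n k : ℕ, k ≤ n →
    bessel n k * (2 ^ k * k.factorial * (n - k).factorial) = (n + k).factorial := by
  intro n
  induction n with
  | zero =>
    intro k hk
    interval_cases k
    simp [bessel_zero]
  | succ n ih =>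
    intro k
    induction k with
    | zero => simp [bessel_zero]
    | succ k ihk =>
      intro hk
      have hkn : k ≤ n + 1 := by omega
      have h2 := ihk hkn
      have hrec : bessel (n + 1) (k + 1)
          = bessel n (k + 1) + ((n + 1) - (k + 1) + 1) * bessel (n + 1) k := by
        rw [bessel, if_neg (by omega)]
      rcases Nat.lt_or_ge k n with hlt | hge
      · -- k + 1 ≤ n
        have h1 := ih (k + 1) (by omega)
        obtain ⟨d, rfl⟩ : ∃ d, n = k + 1 + d := ⟨n - (k + 1), by omega⟩
        have e1 : k + 1 + d - (k + 1) = d := by omega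
        have e2 : k + 1 + d + 1 - (k + 1) = d + 1 := by omega
        have e3 : k + 1 + d + 1 - k = d + 2 := by omega
        have e4 : k + 1 + d + 1 - (k + 1) + 1 = d + 2 := by omega
        rw [e1] at h1
        rw [e3] at h2
        rw [hrec, e2]
        have f5 : k + 1 + d + 1 + k = k + 1 + d + (k + 1) := by ring
        rw [f5] at h2
        have f1 : (d + 1).factorial = (d + 1) * d.factorial := Nat.factorial_succ d
        have f2 : (d + 2).factorial = (d + 2) * ((d + 1) * d.factorial) := by
          rw [Nat.factorial_succ, f1]
        have f4 : (k + 1 + d + 1 + (k + 1)).factorial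
            = (k + 1 + d + 1 + (k + 1)) * (k + 1 + d + (k + 1)).factorial := by
          have h : k + 1 + d + 1 + (k + 1) = (k + 1 + d + (k + 1)) + 1 := by ring
          rw [h, Nat.factorial_succ]
        have f3 : (k + 1).factorial = (k + 1) * k.factorial := Nat.factorial_succ k
        rw [f1, f3, f4]
        rw [f2] at h2; rw [f3] at h1
        zify at h1 h2 ⊢
        linear_combination ((d : ℤ) + 1) * h1 + 2 * ((k : ℤ) + 1) * h2
      · -- k = n
        have hkn' : k = n := by omega
        subst hkn'
        have h0 : bessel k (k + 1) = 0 := bessel_of_lt _ _ (by omega)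
        rw [hrec, h0]
        have e : (k + 1) - (k + 1) + 1 = 1 := by simp
        rw [e, one_mul, zero_add]
        have e2 : k + 1 - (k + 1) = 0 := by omega
        have e3 : k + 1 - k = 1 := by omega
        rw [e3] at h2
        rw [e2]
        have f4 : (k + 1 + (k + 1)).factorial = (k + 1 + (k + 1)) * (k + 1 + k).factorial := by
          have h : k + 1 + (k + 1) = (k + 1 + k) + 1 := by ring
          rw [h, Nat.factorial_succ]
        have f3 : (k + 1).factorial = (k + 1) * k.factorial := Nat.factorial_succ k
        rw [f4, f3]
        rw [Nat.factorial_one] at h2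
        simp only [Nat.factorial_zero]
        zify at h2 ⊢
        linear_combination 2 * ((k : ℤ) + 1) * h2

theorem bessel_coefficients_properties (n : ℕ) (hn : 1 ≤ n) :
    (∀ k ≤ n - 1, 1 ≤ bessel (n - 1) k) ∧
    (∀ k, k + 1 ≤ n - 1 →
      ((-1 : ℤ) ^ k * (bessel (n - 1) k : ℤ)) *
        ((-1 : ℤ) ^ (k + 1) * (bessel (n - 1) (k + 1) : ℤ)) < 0) ∧
    bessel (n - 1) 0 = 1 ∧
    bessel (n - 1) (n - 1) * (2 ^ (n - 1) * Nat.factorial (n - 1)) =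
      Nat.factorial (2 * n - 2) := by
  have pos : ∀ k ≤ n - 1, 1 ≤ bessel (n - 1) k := by
    intro k hk
    have h := bessel_key (n - 1) k hk
    by_contra h0
    have hz : bessel (n - 1) k = 0 := by omega
    rw [hz, zero_mul] at h
    exact absurd h.symm (Nat.factorial_pos _).ne'
  refine ⟨pos, ?_, bessel_zero _, ?_⟩
  · intro k hk
    have ha' : (1 : ℤ) ≤ (bessel (n - 1) k : ℤ) := by exact_mod_cast pos k (by omega)
    have hb' : (1 : ℤ) ≤ (bessel (n - 1) (k + 1) : ℤ) := by exact_mod_cast pos (k + 1) hk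
    have key : ((-1 : ℤ) ^ k * (bessel (n - 1) k : ℤ)) *
        ((-1 : ℤ) ^ (k + 1) * (bessel (n - 1) (k + 1) : ℤ))
        = (-1 : ℤ) ^ (2 * k + 1) * ((bessel (n - 1) k : ℤ) * (bessel (n - 1) (k + 1) : ℤ)) := by
      ring
    rw [key, Odd.neg_one_pow ⟨k, by ring⟩]
    nlinarith
  · have h := bessel_key (n - 1) (n - 1) le_rfl
    have e : n - 1 + (n - 1) = 2 * n - 2 := by omega
    simpa [e] using h
end
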